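/- arXiv:1905.08480 — 2 statements merged into one kernel-verified Lean document; each statement's English description precedes it below -/
import Mathlib

section
/- For every real number E ≥ 0 and κ ≥ 1, the function ψ_{E,κ}(η) = g(κE + κ − ηE − 1) − g((1−η)E) is convex on the interval [0,1], where g(x) = (x+1)ln(x+1) − x ln x for x > 0 and g(0) = 0. -/
/-!
Writing `x = (1 - η)E` and `d = (κ - 1)(E + 1) ≥ 0`, we have `ψ(η) = g(x + d) - g(x)` with `x`
affine in `η`, so it suffices that `x ↦ g(x + d) - g(x)` is convex on `[0, ∞)`. Its second
derivative is `g''(x + d) - g''(x)`, which is nonnegative because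
`g''(x) = 1/(x+1) - 1/x = -1/(x(x+1))` is increasing on `(0, ∞)`.
-/

/-- The entropy function `g(x) = (x+1)·ln(x+1) − x·ln x` (with `g(0) = 0`,
automatic since `Real.log 0 = 0`). -/
noncomputable def g (x : ℝ) : ℝ := (x + 1) * Real.log (x + 1) - x * Real.log x

open Real Set

lemma continuous_g : Continuous g :=
  (continuous_mul_log.comp (continuous_add_const 1)).sub continuous_mul_log

lemma hasDerivAt_g {x : ℝ} (hx : 0 < x) : HasDerivAt g (log (x + 1) - log x) x :=
  (((hasDerivAt_mul_log (by positivity)).comp_add_const x 1).sub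
    (hasDerivAt_mul_log hx.ne')).congr_deriv (by ring)

lemma hasDerivAt_log_add_one_sub_log {x : ℝ} (hx : 0 < x) :
    HasDerivAt (fun y => log (y + 1) - log y) ((x + 1)⁻¹ - x⁻¹) x :=
  ((hasDerivAt_log (by positivity)).comp_add_const x 1).sub (hasDerivAt_log hx.ne')

lemma monotoneOn_inv_add_one_sub_inv : MonotoneOn (fun x : ℝ => (x + 1)⁻¹ - x⁻¹) (Ioi 0) := by
  intro x (hx : 0 < x) y (hy : 0 < y) hxy
  have hprod : x * (x + 1) ≤ y * (y + 1) := by nlinarith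
  have key : ∀ z : ℝ, 0 < z → (z + 1)⁻¹ - z⁻¹ = -(z * (z + 1))⁻¹ := fun z hz => by
    field_simp
    ring
  simp only [key x hx, key y hy, neg_le_neg_iff]
  exact inv_anti₀ (by positivity) hprod

lemma convexOn_g_add_sub_g {d : ℝ} (hd : 0 ≤ d) : ConvexOn ℝ (Ici 0) (fun x => g (x + d) - g x) := by
  refine convexOn_of_hasDerivWithinAt2_nonneg (convex_Ici 0)
    (f' := fun x => (log (x + d + 1) - log (x + d)) - (log (x + 1) - log x))
    (f'' := fun x => ((x + d + 1)⁻¹ - (x + d)⁻¹) - ((x + 1)⁻¹ - x⁻¹))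
    ((continuous_g.comp (continuous_add_const d)).sub continuous_g).continuousOn ?_ ?_ ?_
  all_goals
    rw [interior_Ici]
    intro x (hx : 0 < x)
    have hxd : 0 < x + d := by linarith
  · exact (((hasDerivAt_g hxd).comp_add_const x d).sub (hasDerivAt_g hx)).hasDerivWithinAt
  · exact (((hasDerivAt_log_add_one_sub_log hxd).comp_add_const x d).sub
      (hasDerivAt_log_add_one_sub_log hx)).hasDerivWithinAt
  · exact sub_nonneg.2 (monotoneOn_inv_add_one_sub_inv hx hxd (by linarith))

/-- for `E ≥ 0` and `κ ≥ 1`, the function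
`ψ_{E,κ}(η) = g(κE + κ − ηE − 1) − g((1−η)E)` is convex on `[0,1]`. -/
theorem psi_convexOn (E κ : ℝ) (hE : 0 ≤ E) (hκ : 1 ≤ κ) :
    ConvexOn ℝ (Set.Icc (0 : ℝ) 1)
      (fun η : ℝ => g (κ * E + κ - η * E - 1) - g ((1 - η) * E)) := by
  have hconv := (convexOn_g_add_sub_g (d := (κ - 1) * (E + 1)) (by nlinarith)).comp_affineMap
    (AffineMap.lineMap E 0)
  have hsub : Icc (0 : ℝ) 1 ⊆ AffineMap.lineMap E 0 ⁻¹' Ici 0 := fun η hη => by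
    simp only [mem_preimage, AffineMap.lineMap_apply_ring', mem_Ici]
    nlinarith [hη.1, hη.2]
  have hψ : (fun η : ℝ => g (κ * E + κ - η * E - 1) - g ((1 - η) * E)) =
      (fun x => g (x + (κ - 1) * (E + 1)) - g x) ∘ AffineMap.lineMap E 0 := by
    funext η
    simp only [Function.comp_apply, AffineMap.lineMap_apply_ring']
    congr 2 <;> ring
  rw [hψ]
  exact hconv.subset hsub (convex_Icc 0 1)
end

section
/- For every κ ≥ 1 and E ≥ 0, the 4×4 real symmetric matrix σ with 2×2 blocks σ₁₁ = (E + 1/2)·I₂, σ₂₂ = (ηE + 1/2)·I₂, σ₁₂ = σ₂₁ = √(ηE(E+1))·σ_Z (where σ_Z = diag(1,−1)) has symplectic eigenvalues (1−η)E + 1/2 and 1/2 for every η ∈ [0,1]; that is, the eigenvalues of Δ⁻¹σ are ±i((1−η)E + 1/2) and ±i/2, where Δ is the direct sum of two copies of the 2×2 matrix [[0,1],[−1,0]]. -/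
open Polynomial

/-- The 4×4 symplectic form `Δ = J ⊕ J` with `J = [[0,1],[−1,0]]`. -/
def SymplecticForm : Matrix (Fin 4) (Fin 4) ℝ :=
  !![0, 1, 0, 0; -1, 0, 0, 0; 0, 0, 0, 1; 0, 0, -1, 0]

/-- Covariance matrix of half of a two-mode squeezed vacuum with mean photon
number `E` sent through an attenuator of transmissivity `η`. -/
noncomputable def attCov (E η : ℝ) : Matrix (Fin 4) (Fin 4) ℝ :=
  !![E + 1 / 2, 0, Real.sqrt (η * E * (E + 1)), 0;
     0, E + 1 / 2, 0, -Real.sqrt (η * E * (E + 1));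
     Real.sqrt (η * E * (E + 1)), 0, η * E + 1 / 2, 0;
     0, -Real.sqrt (η * E * (E + 1)), 0, η * E + 1 / 2]

/-! Since `Δ² = -1`, `Δ⁻¹σ = -Δσ`. For `σ = [[a I, c σ_Z], [c σ_Z, b I]]` the characteristic
polynomial of `-Δσ` is the biquadratic `X⁴ + (a² + b² - 2c²) X² + (ab - c²)²`. For the attenuated
two-mode squeezed vacuum, `c² = ηE(E + 1)` gives `a² + b² - 2c² = ν² + (1/2)²` and
`ab - c² = ν/2` with `ν = (1 - η)E + 1/2`, so the polynomial is `(X² + ν²)(X² + 1/4)`. -/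

theorem symplecticForm_mul_self : SymplecticForm * SymplecticForm = -1 := by
  ext i j
  fin_cases i <;> fin_cases j <;> simp [SymplecticForm, Matrix.mul_apply, Fin.sum_univ_four]

theorem inv_symplecticForm : SymplecticForm⁻¹ = -SymplecticForm :=
  Matrix.inv_eq_left_inv (by rw [neg_mul, symplecticForm_mul_self, neg_neg])

theorem neg_symplecticForm_mul_attCov (E η : ℝ) :
    -SymplecticForm * attCov E η =
      !![0, -(E + 1 / 2), 0, √(η * E * (E + 1)); E + 1 / 2, 0, √(η * E * (E + 1)), 0;
        0, √(η * E * (E + 1)), 0, -(η * E + 1 / 2); √(η * E * (E + 1)), 0, η * E + 1 / 2, 0] := by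
  ext i j
  fin_cases i <;> fin_cases j <;> simp [SymplecticForm, attCov, Matrix.mul_apply, Fin.sum_univ_four]

-- `-Δσ` for `σ = [[a I, c σ_Z], [c σ_Z, b I]]`
theorem charpoly_neg_symplecticForm_mul_twoMode {R : Type*} [CommRing R] (a b c : R) :
    (!![0, -a, 0, c; a, 0, c, 0; 0, c, 0, -b; c, 0, b, 0] : Matrix (Fin 4) (Fin 4) R).charpoly =
      X ^ 4 + C (a ^ 2 + b ^ 2 - 2 * c ^ 2) * X ^ 2 + C ((a * b - c ^ 2) ^ 2) := by
  simp [Matrix.charpoly, Matrix.charmatrix_apply, Matrix.det_succ_row_zero, Fin.sum_univ_succ,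
    Fin.succAbove, map_ofNat]
  ring

theorem biquadratic_eq_prod_X_sub_C_mul_I (ν μ : ℂ) :
    X ^ 4 + C (ν ^ 2 + μ ^ 2) * X ^ 2 + C ((ν * μ) ^ 2) =
      (X - C (ν * Complex.I)) * (X - C (-(ν * Complex.I))) *
        (X - C (μ * Complex.I)) * (X - C (-(μ * Complex.I))) := by
  have hI : C Complex.I ^ 2 = (-1 : ℂ[X]) := by rw [← map_pow, Complex.I_sq, map_neg, map_one]
  simp only [map_neg, map_mul, map_add, map_pow]
  linear_combination (X ^ 2 * (C ν ^ 2 + C μ ^ 2) + C ν ^ 2 * C μ ^ 2 * (1 - C Complex.I ^ 2)) * hI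

theorem attCov_symplectic_eigenvalues_general (E η : ℝ) (hE : 0 ≤ E)
    (hη : η ∈ Set.Icc (0 : ℝ) 1) :
    ((SymplecticForm⁻¹ * attCov E η).map (Complex.ofReal ·)).charpoly =
      (X - C (((1 - η) * E + 1 / 2) * Complex.I)) *
      (X - C (-(((1 - η) * E + 1 / 2) * Complex.I))) *
      (X - C (Complex.I / 2)) * (X - C (-(Complex.I / 2))) := by
  have hs : √(η * E * (E + 1)) ^ 2 = η * E * (E + 1) :=
    Real.sq_sqrt (by have := hη.1; positivity)
  have htrace : (E + 1 / 2) ^ 2 + (η * E + 1 / 2) ^ 2 - 2 * √(η * E * (E + 1)) ^ 2 =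
      ((1 - η) * E + 1 / 2) ^ 2 + (1 / 2) ^ 2 := by
    rw [hs]; ring
  have hdet : ((E + 1 / 2) * (η * E + 1 / 2) - √(η * E * (E + 1)) ^ 2) ^ 2 =
      (((1 - η) * E + 1 / 2) * (1 / 2)) ^ 2 := by
    rw [hs]; ring
  change ((SymplecticForm⁻¹ * attCov E η).map Complex.ofRealHom).charpoly = _
  rw [inv_symplecticForm, neg_symplecticForm_mul_attCov, Matrix.charpoly_map,
    charpoly_neg_symplecticForm_mul_twoMode, htrace, hdet, div_eq_mul_inv Complex.I,
    mul_comm Complex.I, ← biquadratic_eq_prod_X_sub_C_mul_I]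
  simp

/-- for `κ ≥ 1`, `E ≥ 0` and `η ∈ [0,1]`, the eigenvalues of
`Δ⁻¹σ` are `±i((1−η)E + 1/2)` and `±i/2`, i.e. the characteristic polynomial of
`Δ⁻¹σ` (over `ℂ`) factors accordingly; the symplectic eigenvalues of `σ` are
thus `(1−η)E + 1/2` and `1/2`. -/
theorem attCov_symplectic_eigenvalues (κ E η : ℝ) (hκ : 1 ≤ κ) (hE : 0 ≤ E)
    (hη : η ∈ Set.Icc (0 : ℝ) 1) :
    ((SymplecticForm⁻¹ * attCov E η).map (Complex.ofReal ·)).charpoly =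
      (X - C (((1 - η) * E + 1 / 2) * Complex.I)) *
      (X - C (-(((1 - η) * E + 1 / 2) * Complex.I))) *
      (X - C (Complex.I / 2)) * (X - C (-(Complex.I / 2))) :=
  attCov_symplectic_eigenvalues_general E η hE hη
end
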